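/- arXiv:0904.2543 — 2 statements merged into one kernel-verified Lean document; each statement's English description precedes it below -/
import Mathlib

section
/- For every integer n ≥ 1 the following identity holds in K, expressing u n as a Laurent polynomial in the cluster {x₁, w, x₃}: u n · x₁ⁿ x₃ⁿ = x₁^{2n} + x₃^{2n} + Σ_{e₁,e₃ ∈ ℕ} [ C(n−e₃, n−e₁)·C(e₁−1, e₃) + C(n−e₃−1, n−e₁)·C(e₁−1, e₃−1) ] · x₁^{2e₃} w^{e₁−e₃} x₃^{2n−2e₁}, where the sum has finitely many nonzero terms. -/
noncomputable section

abbrev Kf : Type := FractionRing (MvPolynomial (Fin 3) ℚ)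

def X1 : Kf := algebraMap (MvPolynomial (Fin 3) ℚ) Kf (MvPolynomial.X 0)
def X2 : Kf := algebraMap (MvPolynomial (Fin 3) ℚ) Kf (MvPolynomial.X 1)
def X3 : Kf := algebraMap (MvPolynomial (Fin 3) ℚ) Kf (MvPolynomial.X 2)

/-- Binomial coefficient of integers, with the convention that it vanishes
unless `0 ≤ b ≤ a`. -/
def ichoose (a b : ℤ) : ℕ := if 0 ≤ b ∧ b ≤ a then a.toNat.choose b.toNat else 0

lemma ichoose_of_neg {a b : ℤ} (h : b < 0) : ichoose a b = 0 := by
  unfold ichoose; rw [if_neg]; omega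

lemma ichoose_of_lt {a b : ℤ} (h : a < b) : ichoose a b = 0 := by
  unfold ichoose; rw [if_neg]; omega

lemma ichoose_bounds {a b : ℤ} (h : ichoose a b ≠ 0) : 0 ≤ b ∧ b ≤ a := by
  by_contra hc
  exact h (by unfold ichoose; rw [if_neg hc])

lemma ichoose_eq_choose {a b : ℤ} (ha : 0 ≤ a) (hb : 0 ≤ b) :
    ichoose a b = a.toNat.choose b.toNat := by
  unfold ichoose
  split_ifs with h
  · rfl
  · rw [Nat.choose_eq_zero_of_lt (by omega)]

lemma ichoose_pascal (a b : ℤ) (ha : 1 ≤ a) :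
    ichoose a b = ichoose (a-1) b + ichoose (a-1) (b-1) := by
  rcases lt_or_ge b 0 with hb | hb
  · rw [ichoose_of_neg hb, ichoose_of_neg hb, ichoose_of_neg (by omega)]
  rcases eq_or_lt_of_le hb with hb0 | hb1
  · subst hb0
    have e1 : ichoose (a-1) (0-1) = 0 := ichoose_of_neg (by omega)
    rw [e1, ichoose_eq_choose (by omega : (0:ℤ) ≤ a) le_rfl,
      ichoose_eq_choose (by omega : (0:ℤ) ≤ a - 1) le_rfl]
    simp
  · rw [ichoose_eq_choose (by omega) hb, ichoose_eq_choose (by omega) (by omega),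
      ichoose_eq_choose (by omega) (by omega)]
    have h1 : a.toNat = (a-1).toNat + 1 := by omega
    have h2 : b.toNat = (b-1).toNat + 1 := by omega
    rw [h1, h2, Nat.choose_succ_succ]
    have h3 : (b-1).toNat + 1 = b.toNat := by omega
    simp only [Nat.succ_eq_add_one, h3]
    omega

lemma pasc (a b : ℤ) (h : 0 ≤ a) :
    ichoose (a+1) (b+1) = ichoose a (b+1) + ichoose a b := by
  have := ichoose_pascal (a+1) (b+1) (by omega)
  simpa using this

lemma ichoose_self {a : ℤ} (h : 0 ≤ a) : ichoose a a = 1 := by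
  rw [ichoose_eq_choose h h, Nat.choose_self]

lemma ichoose_zero {a : ℤ} (h : 0 ≤ a) : ichoose a 0 = 1 := by
  rw [ichoose_eq_choose h le_rfl]
  simp

lemma ichoose_sub_one {a : ℤ} (ha : 1 ≤ a) : ichoose a (a-1) = a.toNat := by
  rw [ichoose_eq_choose (by omega) (by omega)]
  have h : (a-1).toNat = a.toNat - 1 := by omega
  rw [h, Nat.choose_symm (by omega), Nat.choose_one_right]

def Acoef (m e1 e3 : ℤ) : ℕ :=
  ichoose (m - e3) (m - e1) * ichoose (e1 - 1) e3 +
  ichoose (m - e3 - 1) (m - e1) * ichoose (e1 - 1) (e3 - 1)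

lemma Acoef_bounds {m e1 e3 : ℤ} (h : Acoef m e1 e3 ≠ 0) :
    1 ≤ e1 ∧ e1 ≤ m ∧ 0 ≤ e3 ∧ e3 ≤ e1 - 1 := by
  unfold Acoef at h
  by_cases h1 : ichoose (m - e3) (m - e1) * ichoose (e1 - 1) e3 = 0
  · simp only [h1, zero_add] at h
    rcases mul_ne_zero_iff.mp h with ⟨ha, hb⟩
    have b1 := ichoose_bounds ha
    have b2 := ichoose_bounds hb
    omega
  · rcases mul_ne_zero_iff.mp h1 with ⟨ha, hb⟩
    have b1 := ichoose_bounds ha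
    have b2 := ichoose_bounds hb
    omega

lemma Acoef_eq_zero {m e1 e3 : ℤ} (h : ¬(1 ≤ e1 ∧ e1 ≤ m ∧ 0 ≤ e3 ∧ e3 ≤ e1 - 1)) :
    Acoef m e1 e3 = 0 := by
  by_contra hne
  exact h (Acoef_bounds hne)

lemma Acoef_key (m E1 E3 : ℤ) (hm : 1 ≤ m) :
    Acoef (m+1) E1 E3 + Acoef (m-1) (E1-1) (E3-1)
    = Acoef m E1 E3 + Acoef m (E1-1) (E3-1) + Acoef m (E1-1) E3
      + (if E1 = m+1 ∧ E3 = m then 1 else 0) + (if E1 = 1 ∧ E3 = 0 then 1 else 0) := by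
  by_cases hI : 2 ≤ E1 ∧ E3 ≤ m - 1
  · -- interior case
    obtain ⟨hE1, hE3⟩ := hI
    rw [if_neg (by omega), if_neg (by omega)]
    unfold Acoef
    simp only [show m+1-E3 = m-E3+1 from by ring, show m+1-E1 = m-E1+1 from by ring,
      show m-E3+1-1 = m-E3 from by ring, show m-1-(E3-1) = m-E3 from by ring,
      show m-1-(E1-1) = m-E1 from by ring, show E1-1-1 = E1-2 from by ring,
      show E3-1-1 = E3-2 from by ring, show m-(E3-1) = m-E3+1 from by ring,
      show m-(E1-1) = m-E1+1 from by ring]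
    have hA : ichoose (m-E3+1) (m-E1+1) = ichoose (m-E3) (m-E1+1) + ichoose (m-E3) (m-E1) :=
      pasc (m-E3) (m-E1) (by omega)
    have hB : ichoose (m-E3) (m-E1+1) = ichoose (m-E3-1) (m-E1+1) + ichoose (m-E3-1) (m-E1) := by
      have := pasc (m-E3-1) (m-E1) (by omega)
      simpa only [show m-E3-1+1 = m-E3 from by ring] using this
    have hC : ichoose (m-E3) (m-E1) = ichoose (m-E3-1) (m-E1) + ichoose (m-E3-1) (m-E1-1) := by
      have := pasc (m-E3-1) (m-E1-1) (by omega)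
      simpa only [show m-E3-1+1 = m-E3 from by ring, show m-E1-1+1 = m-E1 from by ring] using this
    have hD : ichoose (E1-1) E3 = ichoose (E1-2) E3 + ichoose (E1-2) (E3-1) := by
      have := pasc (E1-2) (E3-1) (by omega)
      simpa only [show E1-2+1 = E1-1 from by ring, show E3-1+1 = E3 from by ring] using this
    have hE : ichoose (E1-1) (E3-1) = ichoose (E1-2) (E3-1) + ichoose (E1-2) (E3-2) := by
      have := pasc (E1-2) (E3-2) (by omega)
      simpa only [show E1-2+1 = E1-1 from by ring, show E3-2+1 = E3-1 from by ring] using this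
    rw [hA, hB, hC, hD, hE]
    ring
  · push_neg at hI
    by_cases hE1 : E1 ≤ 1
    · by_cases hA1 : E1 = 1 ∧ E3 = 0
      · -- case A
        obtain ⟨h1, h3⟩ := hA1
        subst h1; subst h3
        rw [if_neg (by omega), if_pos ⟨rfl, rfl⟩]
        rw [Acoef_eq_zero (m := m-1) (by omega), Acoef_eq_zero (m := m) (e1 := 1-1) (by omega),
          Acoef_eq_zero (m := m) (e1 := 1-1) (e3 := 0) (by omega)]
        unfold Acoef
        simp only [show m+1-(0:ℤ) = m+1 from by ring, show m-(0:ℤ) = m from by ring,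
          show (1:ℤ)-1 = 0 from by ring, show (0:ℤ)-1 = -1 from by ring]
        have e1 : ichoose (0:ℤ) 0 = 1 := ichoose_zero le_rfl
        have e2 : ichoose (0:ℤ) (-1) = 0 := ichoose_of_neg (by norm_num)
        have e3 : ichoose (m+1) (m+1-1) = (m+1).toNat := ichoose_sub_one (by omega)
        have e4 : ichoose m (m-1) = m.toNat := ichoose_sub_one (by omega)
        have e5 : ichoose (m+1-1) (m+1-1) = 1 := ichoose_self (by omega)
        have e6 : ichoose (m-1) (m-1) = 1 := ichoose_self (by omega)
        rw [e1, e2, e3, e4, e5, e6]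
        omega
      · -- zero case, E1 ≤ 1 but not (1,0)
        rw [Acoef_eq_zero (by omega), Acoef_eq_zero (by omega), Acoef_eq_zero (by omega),
          Acoef_eq_zero (by omega), Acoef_eq_zero (by omega), if_neg (by omega), if_neg (by omega)]
    · -- E3 ≥ m, E1 ≥ 2
      have hE3 : m ≤ E3 := by omega
      push_neg at hE1
      by_cases hC1 : E1 = m+1 ∧ E3 = m
      · obtain ⟨h1, h3⟩ := hC1
        subst h1
        rw [h3, if_pos ⟨rfl, rfl⟩, if_neg (by omega)]
        rw [Acoef_eq_zero (m := m-1) (by omega), Acoef_eq_zero (m := m) (e1 := m+1) (by omega),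
          Acoef_eq_zero (m := m) (e1 := m+1-1) (e3 := m) (by omega)]
        unfold Acoef
        simp only [show m+1-m = (1:ℤ) from by ring, show m+1-(m+1) = (0:ℤ) from by ring,
          show m+1-m-1 = (0:ℤ) from by ring, show m+1-1 = m from by ring,
          show m-(m-1) = (1:ℤ) from by ring, show m-m = (0:ℤ) from by ring,
          show m-(m-1)-1 = (0:ℤ) from by ring, show (1:ℤ)-1 = 0 from by ring,
          show m-1-1 = m-2 from by ring]
        have e1 : ichoose 1 0 = 1 := ichoose_zero (by norm_num)
        have e2 : ichoose 0 0 = 1 := ichoose_zero (by norm_num)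
        have e3 : ichoose m m = 1 := ichoose_self (by omega)
        have e4 : ichoose m (m-1) = m.toNat := ichoose_sub_one (by omega)
        have e5 : ichoose (m-1) (m-1) = 1 := ichoose_self (by omega)
        have e6 : ichoose (m-1) (m-2) = (m-1).toNat := by
          by_cases hm2 : 2 ≤ m
          · have := ichoose_sub_one (a := m-1) (by omega)
            simpa only [show m-1-1 = m-2 from by ring] using this
          · have hm1 : m = 1 := by omega
            subst hm1
            norm_num
            rw [ichoose_of_neg (by norm_num)]
        rw [e1, e2, e3, e4, e5, e6]
        omega
      · -- zero case
        rw [Acoef_eq_zero (by omega), Acoef_eq_zero (by omega), Acoef_eq_zero (by omega),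
          Acoef_eq_zero (by omega), Acoef_eq_zero (by omega), if_neg (by omega), if_neg (by omega)]

-- Part 3: monomials
def mono (w : Kf) (ν : ℤ) (E : ℤ × ℤ) : Kf :=
  X1 ^ (2 * E.2) * w ^ (E.1 - E.2) * X3 ^ (2 * ν - 2 * E.1)

def gfun (w : Kf) (ν : ℤ) (E : ℤ × ℤ) : Kf := (Acoef ν E.1 E.2 : Kf) * mono w ν E

def gg (w : Kf) (ν μ : ℤ) (d1 d2 : ℤ) (E : ℤ × ℤ) : Kf :=
  (Acoef ν (E.1 - d1) (E.2 - d2) : Kf) * mono w μ E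

def dd (w : Kf) (μ : ℤ) (p1 p2 : ℤ) (E : ℤ × ℤ) : Kf :=
  ((if E.1 = p1 ∧ E.2 = p2 then 1 else 0 : ℕ) : Kf) * mono w μ E

lemma mono_shift_a {w : Kf} (hX1 : X1 ≠ 0) (ν : ℤ) (E : ℤ × ℤ) :
    mono w (ν+1) (E.1+1, E.2+1) = X1 ^ (2:ℤ) * mono w ν E := by
  unfold mono
  simp only
  rw [show 2*(E.2+1) = 2*E.2+2 from by ring, show E.1+1-(E.2+1) = E.1-E.2 from by ring,
    show 2*(ν+1)-2*(E.1+1) = 2*ν-2*E.1 from by ring, zpow_add₀ hX1]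
  ring

lemma mono_shift_b {w : Kf} (hX3 : X3 ≠ 0) (ν : ℤ) (E : ℤ × ℤ) :
    mono w (ν+1) E = X3 ^ (2:ℤ) * mono w ν E := by
  unfold mono
  rw [show 2*(ν+1)-2*E.1 = (2*ν-2*E.1)+2 from by ring, zpow_add₀ hX3]
  ring

lemma mono_shift_c {w : Kf} (hww : w ≠ 0) (ν : ℤ) (E : ℤ × ℤ) :
    mono w (ν+1) (E.1+1, E.2) = w * mono w ν E := by
  unfold mono
  simp only
  rw [show E.1+1-E.2 = (E.1-E.2)+1 from by ring, show 2*(ν+1)-2*(E.1+1) = 2*ν-2*E.1 from by ring,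
    zpow_add₀ hww, zpow_one]
  ring

lemma support_coefmono (w : Kf) (ν : ℤ) (co : ℤ × ℤ → ℕ) (B : ℤ)
    (h : ∀ E : ℤ × ℤ, co E ≠ 0 → 0 ≤ E.1 ∧ E.1 ≤ B ∧ 0 ≤ E.2 ∧ E.2 ≤ B) :
    (Function.support fun E => (co E : Kf) * mono w ν E).Finite := by
  apply Set.Finite.subset (Set.finite_Icc ((0:ℤ),(0:ℤ)) (B,B))
  intro E hE
  have hco : co E ≠ 0 := by
    intro h0
    apply hE
    simp [h0]
  have hb := h E hco
  simp only [Set.mem_Icc, Prod.le_def]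
  constructor <;> constructor <;> omega

lemma gfun_fin (w : Kf) (ν : ℤ) : (Function.support (gfun w ν)).Finite := by
  apply support_coefmono w ν (fun E => Acoef ν E.1 E.2) ν
  intro E h
  have := Acoef_bounds h
  omega

lemma gg_fin (w : Kf) (ν μ : ℤ) (d1 d2 : ℤ) (hd1 : 0 ≤ d1) (hd2 : 0 ≤ d2) :
    (Function.support (gg w ν μ d1 d2)).Finite := by
  apply support_coefmono w μ (fun E => Acoef ν (E.1 - d1) (E.2 - d2)) (ν + d1 + d2)
  intro E h
  have := Acoef_bounds h
  omega

lemma dd_fin (w : Kf) (μ : ℤ) (p1 p2 : ℤ) (hp1 : 0 ≤ p1) (hp2 : 0 ≤ p2) :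
    (Function.support (dd w μ p1 p2)).Finite := by
  apply support_coefmono w μ (fun E => if E.1 = p1 ∧ E.2 = p2 then 1 else 0) (p1 + p2)
  intro E h
  simp only [ne_eq, ite_eq_right_iff, one_ne_zero, imp_false, not_not] at h
  omega

lemma dd_sum (w : Kf) (μ : ℤ) (p1 p2 : ℤ) :
    ∑ᶠ E : ℤ × ℤ, dd w μ p1 p2 E = mono w μ (p1, p2) := by
  rw [finsum_eq_single _ (p1, p2)]
  · unfold dd
    rw [if_pos ⟨rfl, rfl⟩]
    simp
  · intro x hx
    unfold dd
    rw [if_neg]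
    · simp
    · intro hc
      exact hx (Prod.ext hc.1 hc.2)

lemma shift11 (w : Kf) (hX1 : X1 ≠ 0) (hX3 : X3 ≠ 0) (ν : ℤ)
    (hfin : (Function.support (gfun w (ν+1))).Finite) :
    X1^2 * ∑ᶠ E : ℤ × ℤ, gfun w (ν+1) E = ∑ᶠ E : ℤ × ℤ, gg w (ν+1) (ν+2) 1 1 E := by
  rw [mul_finsum _ _]
  rw [← finsum_comp_equiv (Equiv.addRight ((1:ℤ),(1:ℤ))) (f := gg w (ν+1) (ν+2) 1 1)]
  apply finsum_congr
  intro E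
  unfold gfun gg
  simp only [Equiv.coe_addRight, Prod.fst_add, Prod.snd_add, add_sub_cancel_right]
  have hm : mono w (ν+2) (E + (1,1)) = X1 ^ (2:ℤ) * mono w (ν+1) E := by
    have := mono_shift_a (w := w) hX1 (ν+1) E
    rw [show ν+1+1 = ν+2 from by ring] at this
    rw [show E + ((1:ℤ),(1:ℤ)) = (E.1+1, E.2+1) from Prod.ext rfl rfl]
    exact this
  rw [hm, show X1 ^ (2:ℤ) = X1^2 from by rw [zpow_two, pow_two]]
  ring

lemma shift00 (w : Kf) (hX3 : X3 ≠ 0) (ν : ℤ)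
    (hfin : (Function.support (gfun w (ν+1))).Finite) :
    X3^2 * ∑ᶠ E : ℤ × ℤ, gfun w (ν+1) E = ∑ᶠ E : ℤ × ℤ, gg w (ν+1) (ν+2) 0 0 E := by
  rw [mul_finsum _ _]
  apply finsum_congr
  intro E
  unfold gfun gg
  simp only [sub_zero]
  have := mono_shift_b (w := w) hX3 (ν+1) E
  rw [show ν+1+1 = ν+2 from by ring] at this
  rw [this, show X3 ^ (2:ℤ) = X3^2 from by rw [zpow_two, pow_two]]
  ring

lemma shift10 (w : Kf) (hww : w ≠ 0) (ν : ℤ)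
    (hfin : (Function.support (gfun w (ν+1))).Finite) :
    w * ∑ᶠ E : ℤ × ℤ, gfun w (ν+1) E = ∑ᶠ E : ℤ × ℤ, gg w (ν+1) (ν+2) 1 0 E := by
  rw [mul_finsum _ _]
  rw [← finsum_comp_equiv (Equiv.addRight ((1:ℤ),(0:ℤ))) (f := gg w (ν+1) (ν+2) 1 0)]
  apply finsum_congr
  intro E
  unfold gfun gg
  simp only [Equiv.coe_addRight, Prod.fst_add, Prod.snd_add, add_sub_cancel_right, add_zero,
    sub_zero]
  have hm : mono w (ν+2) (E + (1,0)) = w * mono w (ν+1) E := by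
    have := mono_shift_c (w := w) hww (ν+1) E
    rw [show ν+1+1 = ν+2 from by ring] at this
    rw [show E + ((1:ℤ),(0:ℤ)) = (E.1+1, E.2) from Prod.ext rfl (add_zero _)]
    exact this
  rw [hm]
  ring

lemma shiftab (w : Kf) (hX1 : X1 ≠ 0) (hX3 : X3 ≠ 0) (ν : ℤ)
    (hfin : (Function.support (gfun w ν)).Finite) :
    (X1^2 * X3^2) * ∑ᶠ E : ℤ × ℤ, gfun w ν E = ∑ᶠ E : ℤ × ℤ, gg w ν (ν+2) 1 1 E := by
  rw [mul_finsum _ _]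
  rw [← finsum_comp_equiv (Equiv.addRight ((1:ℤ),(1:ℤ))) (f := gg w ν (ν+2) 1 1)]
  apply finsum_congr
  intro E
  unfold gfun gg
  simp only [Equiv.coe_addRight, Prod.fst_add, Prod.snd_add, add_sub_cancel_right]
  have hm : mono w (ν+2) (E + (1,1)) = X1 ^ (2:ℤ) * (X3 ^ (2:ℤ) * mono w ν E) := by
    have h1 := mono_shift_a (w := w) hX1 (ν+1) E
    rw [show ν+1+1 = ν+2 from by ring] at h1
    rw [show E + ((1:ℤ),(1:ℤ)) = (E.1+1, E.2+1) from Prod.ext rfl rfl, h1,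
      mono_shift_b (w := w) hX3 ν E]
  rw [hm, show X1 ^ (2:ℤ) = X1^2 from by rw [zpow_two, pow_two],
    show X3 ^ (2:ℤ) = X3^2 from by rw [zpow_two, pow_two]]
  ring

lemma fin_add {α : Type*} {f g : α → Kf} (hf : (Function.support f).Finite)
    (hg : (Function.support g).Finite) : (Function.support fun x => f x + g x).Finite := by
  apply Set.Finite.subset (hf.union hg)
  intro x hx
  simp only [Function.mem_support, Set.mem_union] at *
  by_contra hc
  push_neg at hc
  exact hx (by rw [hc.1, hc.2, add_zero])

lemma T_rec (w : Kf) (hX1 : X1 ≠ 0) (hX3 : X3 ≠ 0) (hww : w ≠ 0) (n : ℕ) :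
    (X1^2 + X3^2 + w) * (X1^(2*(n+1)) + X3^(2*(n+1)) + ∑ᶠ E : ℤ×ℤ, gfun w ((n:ℤ)+1) E)
    = (X1^(2*(n+2)) + X3^(2*(n+2)) + ∑ᶠ E : ℤ×ℤ, gfun w ((n:ℤ)+2) E)
      + (X1^2*X3^2) * (X1^(2*n) + X3^(2*n) + ∑ᶠ E : ℤ×ℤ, gfun w (n:ℤ) E) := by
  have hf1 : (Function.support (gfun w ((n:ℤ)+1))).Finite := gfun_fin w _
  have hf0 : (Function.support (gfun w (n:ℤ))).Finite := gfun_fin w _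
  have hf2 : (Function.support (gfun w ((n:ℤ)+2))).Finite := gfun_fin w _
  have hgA : (Function.support (gg w ((n:ℤ)+1) ((n:ℤ)+2) 1 1)).Finite :=
    gg_fin w _ _ _ _ (by norm_num) (by norm_num)
  have hgB : (Function.support (gg w ((n:ℤ)+1) ((n:ℤ)+2) 0 0)).Finite :=
    gg_fin w _ _ _ _ (by norm_num) (by norm_num)
  have hgC : (Function.support (gg w ((n:ℤ)+1) ((n:ℤ)+2) 1 0)).Finite :=
    gg_fin w _ _ _ _ (by norm_num) (by norm_num)
  have hgD : (Function.support (gg w (n:ℤ) ((n:ℤ)+2) 1 1)).Finite :=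
    gg_fin w _ _ _ _ (by norm_num) (by norm_num)
  have hd1 : (Function.support (dd w ((n:ℤ)+2) ((n:ℤ)+2) ((n:ℤ)+1))).Finite :=
    dd_fin w _ _ _ (by omega) (by omega)
  have hd2 : (Function.support (dd w ((n:ℤ)+2) 1 0)).Finite :=
    dd_fin w _ _ _ (by norm_num) (by norm_num)
  have hd1v : w * X1^(2*(n+1)) = ∑ᶠ E : ℤ×ℤ, dd w ((n:ℤ)+2) ((n:ℤ)+2) ((n:ℤ)+1) E := by
    rw [dd_sum]
    unfold mono
    simp only
    rw [show ((n:ℤ)+2) - ((n:ℤ)+1) = 1 from by ring,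
      show 2*((n:ℤ)+2) - 2*((n:ℤ)+2) = 0 from by ring,
      zpow_one, zpow_zero, mul_one,
      show (2*((n:ℤ)+1)) = ((2*(n+1) : ℕ) : ℤ) from by push_cast; ring, zpow_natCast]
    ring
  have hd2v : w * X3^(2*(n+1)) = ∑ᶠ E : ℤ×ℤ, dd w ((n:ℤ)+2) 1 0 E := by
    rw [dd_sum]
    unfold mono
    simp only
    rw [show (2:ℤ)*(0:ℤ) = 0 from by ring, show (1:ℤ)-0 = 1 from by ring, zpow_zero, zpow_one,
      one_mul, show 2*((n:ℤ)+2) - 2*1 = ((2*(n+1):ℕ) : ℤ) from by push_cast; ring, zpow_natCast]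
  have main : X1^2 * (∑ᶠ E : ℤ×ℤ, gfun w ((n:ℤ)+1) E)
      + X3^2 * (∑ᶠ E : ℤ×ℤ, gfun w ((n:ℤ)+1) E)
      + w * (∑ᶠ E : ℤ×ℤ, gfun w ((n:ℤ)+1) E)
      + (w * X1^(2*(n+1)) + w * X3^(2*(n+1)))
      = (∑ᶠ E : ℤ×ℤ, gfun w ((n:ℤ)+2) E)
        + (X1^2*X3^2) * (∑ᶠ E : ℤ×ℤ, gfun w (n:ℤ) E) := by
    rw [shift11 w hX1 hX3 (n:ℤ) hf1, shift00 w hX3 (n:ℤ) hf1, shift10 w hww (n:ℤ) hf1,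
      shiftab w hX1 hX3 (n:ℤ) hf0, hd1v, hd2v]
    rw [← finsum_add_distrib hgA hgB, ← finsum_add_distrib (fin_add hgA hgB) hgC,
      ← finsum_add_distrib hd1 hd2,
      ← finsum_add_distrib (fin_add (fin_add hgA hgB) hgC) (fin_add hd1 hd2),
      ← finsum_add_distrib hf2 hgD]
    apply finsum_congr
    intro E
    have hk := Acoef_key ((n:ℤ)+1) E.1 E.2 (by omega)
    simp only [show (n:ℤ)+1+1 = (n:ℤ)+2 from by ring, show (n:ℤ)+1-1 = (n:ℤ) from by ring] at hk
    have hc := congrArg (fun k : ℕ => (k : Kf) * mono w ((n:ℤ)+2) E) hk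
    simp only [Nat.cast_add, add_mul] at hc
    unfold gfun gg dd
    simp only [sub_zero]
    linear_combination -hc
  have pA : X1^(2*(n+2)) = X1^2 * X1^(2*(n+1)) := by rw [← pow_add]; congr 1; ring
  have pB : X3^(2*(n+2)) = X3^2 * X3^(2*(n+1)) := by rw [← pow_add]; congr 1; ring
  have pC : X1^(2*(n+1)) = X1^2 * X1^(2*n) := by rw [← pow_add]; congr 1; ring
  have pD : X3^(2*(n+1)) = X3^2 * X3^(2*n) := by rw [← pow_add]; congr 1; ring
  rw [pA, pB]
  rw [pC, pD] at main ⊢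
  linear_combination main

lemma T0sum (w : Kf) : ∑ᶠ E : ℤ×ℤ, gfun w 0 E = 0 := by
  apply finsum_eq_zero_of_forall_eq_zero
  intro E
  unfold gfun
  rw [Acoef_eq_zero (by omega)]
  simp

lemma T1sum (w : Kf) : ∑ᶠ E : ℤ×ℤ, gfun w 1 E = w := by
  rw [finsum_eq_single _ ((1:ℤ), (0:ℤ))]
  · unfold gfun mono
    simp only
    have hA : Acoef 1 1 0 = 1 := by
      unfold Acoef
      norm_num
      have e1 : ichoose 1 0 = 1 := ichoose_zero (by norm_num)
      have e2 : ichoose 0 0 = 1 := ichoose_zero (by norm_num)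
      have e3 : ichoose 0 (-1 : ℤ) = 0 := ichoose_of_neg (by norm_num)
      rw [e1, e2, e3]
    rw [hA]
    norm_num
  · intro x hx
    unfold gfun
    have : Acoef 1 x.1 x.2 = 0 := by
      apply Acoef_eq_zero
      intro hb
      exact hx (Prod.ext (by omega) (by omega))
    rw [this]
    simp

lemma u_eq_T (w : Kf) (hX1 : X1 ≠ 0) (hX3 : X3 ≠ 0) (hww : w ≠ 0)
    (u : ℕ → Kf) (hu1X : u 1 * (X1 * X3) = X1^2 + X3^2 + w)
    (hu2 : u 2 = (u 1)^2 - 2)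
    (hurec : ∀ n : ℕ, 2 ≤ n → u (n + 1) = u 1 * u n - u (n - 1)) :
    ∀ ν : ℕ, u (ν+1) * X1^(ν+1) * X3^(ν+1)
      = X1^(2*(ν+1)) + X3^(2*(ν+1)) + ∑ᶠ E : ℤ×ℤ, gfun w ((ν:ℤ)+1) E := by
  have P0 : u 1 * X1^(0+1) * X3^(0+1)
      = X1^(2*(0+1)) + X3^(2*(0+1)) + ∑ᶠ E : ℤ×ℤ, gfun w (((0:ℕ):ℤ)+1) E := by
    simp only [Nat.cast_zero, zero_add, pow_one]
    rw [T1sum w]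
    norm_num
    linear_combination hu1X
  have P1 : u 2 * X1^(1+1) * X3^(1+1)
      = X1^(2*(1+1)) + X3^(2*(1+1)) + ∑ᶠ E : ℤ×ℤ, gfun w (((1:ℕ):ℤ)+1) E := by
    have R := T_rec w hX1 hX3 hww 0
    simp only [Nat.cast_zero, zero_add, Nat.cast_one] at R ⊢
    norm_num at R ⊢
    rw [T1sum w, T0sum w] at R
    rw [hu2]
    linear_combination R + (u 1 * (X1*X3) + (X1^2+X3^2+w)) * hu1X
  have key : ∀ ν : ℕ,
      (u (ν+1) * X1^(ν+1) * X3^(ν+1)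
        = X1^(2*(ν+1)) + X3^(2*(ν+1)) + ∑ᶠ E : ℤ×ℤ, gfun w ((ν:ℤ)+1) E) ∧
      (u (ν+1+1) * X1^(ν+1+1) * X3^(ν+1+1)
        = X1^(2*(ν+1+1)) + X3^(2*(ν+1+1)) + ∑ᶠ E : ℤ×ℤ, gfun w (((ν+1:ℕ):ℤ)+1) E) := by
    intro ν
    induction ν with
    | zero => exact ⟨P0, P1⟩
    | succ ν ih =>
      obtain ⟨ih1, ih2⟩ := ih
      refine ⟨ih2, ?_⟩
      have hr : u (ν+3) = u 1 * u (ν+2) - u (ν+1) := by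
        have := hurec (ν+2) (by omega)
        simpa using this
      have R := T_rec w hX1 hX3 hww (ν+1)
      simp only [show ((ν+1:ℕ):ℤ) = (ν:ℤ)+1 from by push_cast; ring,
        show ((ν+2:ℕ):ℤ) = (ν:ℤ)+2 from by push_cast; ring,
        show (ν:ℤ)+1+1 = (ν:ℤ)+2 from by ring, show (ν:ℤ)+1+2 = (ν:ℤ)+3 from by ring,
        show (ν:ℤ)+2+1 = (ν:ℤ)+3 from by ring,
        show ν+1+1 = ν+2 from by omega, show ν+2+1 = ν+3 from by omega,
        show ν+1+2 = ν+3 from by omega,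
        show 2*(ν+1) = 2*ν+2 from by omega, show 2*(ν+2) = 2*ν+4 from by omega,
        show 2*(ν+3) = 2*ν+6 from by omega] at R ih1 ih2 ⊢
      rw [hr]
      linear_combination R + (u 1 * (X1*X3)) * ih2
        + (X1^(2*ν+4) + X3^(2*ν+4) + ∑ᶠ E : ℤ×ℤ, gfun w ((ν:ℤ)+2) E) * hu1X
        - (X1^2*X3^2) * ih1
  intro ν
  exact (key ν).1

lemma algMap_ne {p : MvPolynomial (Fin 3) ℚ} (hp : p ≠ 0) :
    algebraMap (MvPolynomial (Fin 3) ℚ) Kf p ≠ 0 := by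
  intro h
  apply hp
  apply IsFractionRing.injective (MvPolynomial (Fin 3) ℚ) Kf
  simpa using h

lemma X13_ne : X1 + X3 ≠ 0 := by
  unfold X1 X3
  rw [← map_add]
  apply algMap_ne
  intro h
  have := congrArg (MvPolynomial.eval (fun _ => (1:ℚ))) h
  simp at this

theorem stmt6 (x : ℤ → Kf)
    (h1 : x 1 = X1) (h2 : x 2 = X2) (h3 : x 3 = X3)
    (hne : ∀ m : ℤ, x m ≠ 0)
    (hrec : ∀ m : ℤ, x m * x (m + 3) = x (m + 1) * x (m + 2) + 1)
    (w z : Kf)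
    (hw : w = (X1 + X3) / X2)
    (hz : z = (X1 * X2 + 1 + X2 * X3) / (X1 * X3))
    (u : ℕ → Kf)
    (hu0 : u 0 = 1) (hu1 : u 1 = z * w - 2) (hu2 : u 2 = (u 1) ^ 2 - 2)
    (hurec : ∀ n : ℕ, 2 ≤ n → u (n + 1) = u 1 * u n - u (n - 1)) :
    ∀ n : ℕ, 1 ≤ n →
      ∀ f : ℕ × ℕ → Kf,
        (f = fun e =>
          ((ichoose ((n : ℤ) - (e.2 : ℤ)) ((n : ℤ) - (e.1 : ℤ)) *
              ichoose ((e.1 : ℤ) - 1) (e.2 : ℤ) +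
            ichoose ((n : ℤ) - (e.2 : ℤ) - 1) ((n : ℤ) - (e.1 : ℤ)) *
              ichoose ((e.1 : ℤ) - 1) ((e.2 : ℤ) - 1) : ℕ) : Kf) *
            X1 ^ (2 * (e.2 : ℤ)) * w ^ ((e.1 : ℤ) - (e.2 : ℤ)) *
            X3 ^ (2 * (n : ℤ) - 2 * (e.1 : ℤ))) →
        (Function.support f).Finite ∧
        u n * X1 ^ n * X3 ^ n =
          X1 ^ (2 * n) + X3 ^ (2 * n) + ∑ᶠ e : ℕ × ℕ, f e := by

  have hX1 : X1 ≠ 0 := by rw [← h1]; exact hne 1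
  have hX2 : X2 ≠ 0 := by rw [← h2]; exact hne 2
  have hX3 : X3 ≠ 0 := by rw [← h3]; exact hne 3
  have hww : w ≠ 0 := by rw [hw]; exact div_ne_zero X13_ne hX2
  have hu1X : u 1 * (X1 * X3) = X1^2 + X3^2 + w := by
    rw [hu1, hz, hw]
    field_simp
    ring
  intro n hn f hf
  obtain ⟨k, rfl⟩ : ∃ k, n = k + 1 := ⟨n - 1, by omega⟩
  have hfg : ∀ e : ℕ × ℕ, f e = gfun w ((k+1:ℕ):ℤ) ((e.1:ℤ), (e.2:ℤ)) := by
    intro e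
    rw [hf]
    simp only [gfun, mono, Acoef]
    ring
  have hinj : Function.Injective (fun e : ℕ × ℕ => ((e.1:ℤ), (e.2:ℤ))) := by
    intro a b hab
    simp only [Prod.mk.injEq, Nat.cast_inj] at hab
    exact Prod.ext hab.1 hab.2
  have hsupp : Function.support (gfun w ((k+1:ℕ):ℤ))
      ⊆ Set.range (fun e : ℕ × ℕ => ((e.1:ℤ), (e.2:ℤ))) := by
    intro E hE
    have hA : Acoef ((k+1:ℕ):ℤ) E.1 E.2 ≠ 0 := by
      intro h0
      apply hE
      unfold gfun
      rw [h0]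
      simp
    have hb := Acoef_bounds hA
    refine ⟨(E.1.toNat, E.2.toNat), ?_⟩
    show ((E.1.toNat : ℤ), (E.2.toNat : ℤ)) = E
    refine Prod.ext ?_ ?_ <;> simp <;> omega
  constructor
  · have hsub : Function.support f
        ⊆ (fun e : ℕ × ℕ => ((e.1:ℤ), (e.2:ℤ))) ⁻¹' (Function.support (gfun w ((k+1:ℕ):ℤ))) := by
      intro e he
      simp only [Set.mem_preimage, Function.mem_support] at *
      rw [← hfg e]
      exact he
    exact Set.Finite.subset (Set.Finite.preimage hinj.injOn (gfun_fin w _)) hsub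
  · have hbridge : ∑ᶠ e : ℕ × ℕ, f e = ∑ᶠ E : ℤ × ℤ, gfun w ((k+1:ℕ):ℤ) E := by
      rw [finsum_congr hfg, ← finsum_mem_range hinj, finsum_mem_def,
        Set.indicator_eq_self.2 hsupp]
    rw [hbridge, show ((k+1:ℕ):ℤ) = (k:ℤ)+1 from by push_cast; ring]
    exact u_eq_T w hX1 hX3 hww u hu1X hu2 hurec k

end
end

section
/- The denominator vectors in the cluster {x₁,x₂,x₃} are as follows. For every m ≥ 2 there exists P ∈ ℚ[x₁,x₂,x₃] divisible by none of x₁, x₂, x₃ such that x(2m+1) = P/(x₁^{m−1} x₂^{m−1} x₃^{m−2}); for every m ≥ 1 there exists such P with x(2m+2) = P/(x₁^{m} x₂^{m−1} x₃^{m−1}); for every m ≥ 1 there exists such P with x(−2m+1) = P/(x₁^{m−1} x₂^{m} x₃^{m}), and such P with x(−2m+2) = P/(x₁^{m−1} x₂^{m−1} x₃^{m}); and for every n ≥ 1 there exists such P with u n = P/(x₁ x₂ x₃)ⁿ. -/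
noncomputable section

/-- `P` is divisible by none of the three variables. -/
def Primitive (P : MvPolynomial (Fin 3) ℚ) : Prop :=
  ¬ (MvPolynomial.X 0 ∣ P) ∧ ¬ (MvPolynomial.X 1 ∣ P) ∧ ¬ (MvPolynomial.X 2 ∣ P)

open MvPolynomial

abbrev A3 : Type := MvPolynomial (Fin 3) ℚ
abbrev ag : A3 →+* Kf := algebraMap A3 Kf

def Cp : A3 := X 0 * X 1 * X 2
def Up : A3 := (X 0 * X 1 + 1 + X 1 * X 2) * (X 0 + X 2) - 2 * Cp
def vv : Fin 3 → Fin 3 → ℚ := ![![0,1,1], ![1,0,1], ![1,1,0]]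
def Good (P : A3) : Prop := ∀ i : Fin 3, eval (vv i) P ≠ 0

lemma vv_diag : ∀ i : Fin 3, vv i i = 0 := by intro i; fin_cases i <;> simp [vv]

lemma good_primitive {P : A3} (h : Good P) : Primitive P := by
  refine ⟨?_, ?_, ?_⟩ <;> rintro ⟨Q, rfl⟩
  · exact h 0 (by rw [map_mul, eval_X, vv_diag, zero_mul])
  · exact h 1 (by rw [map_mul, eval_X, vv_diag, zero_mul])
  · exact h 2 (by rw [map_mul, eval_X, vv_diag, zero_mul])

lemma eval_Cp : ∀ i : Fin 3, eval (vv i) Cp = 0 := by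
  intro i; fin_cases i <;> simp [Cp, vv]

lemma good_Up : Good Up := by
  intro i; fin_cases i <;> simp [Up, Cp, vv]

lemma ag_inj : Function.Injective ag := IsFractionRing.injective A3 Kf
lemma ag_X0 : ag (X 0) = X1 := rfl
lemma ag_X1 : ag (X 1) = X2 := rfl
lemma ag_X2 : ag (X 2) = X3 := rfl
lemma agne {P : A3} (h : P ≠ 0) : ag P ≠ 0 := fun hh => h (ag_inj (by rw [hh, map_zero]))
lemma hX1 : X1 ≠ 0 := agne (X_ne_zero 0)
lemma hX2 : X2 ≠ 0 := agne (X_ne_zero 1)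
lemma hX3 : X3 ≠ 0 := agne (X_ne_zero 2)
lemma ag_Cp : ag Cp = X1 * X2 * X3 := by rw [Cp, map_mul, map_mul, ag_X0, ag_X1, ag_X2]
lemma hCp : ag Cp ≠ 0 := by rw [ag_Cp]; exact mul_ne_zero (mul_ne_zero hX1 hX2) hX3
lemma ag_Up : ag Up = (X1 * X2 + 1 + X2 * X3) * (X1 + X3) - 2 * (X1 * X2 * X3) := by
  simp only [Up, map_sub, map_mul, map_add, map_one, map_ofNat, ag_Cp, ag_X0, ag_X1, ag_X2]

lemma good_step {Q R : A3} (gQ : Good Q) (hR : ∀ i : Fin 3, eval (vv i) R = 0) :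
    Good (Up * Q - R) := by
  intro i
  rw [map_sub, map_mul, hR, sub_zero]
  exact mul_ne_zero (good_Up i) (gQ i)

lemma genKey (u1v : Kf) (hu1v : u1v * ag Cp = ag Up)
    (a : ℕ → Kf) (e : Kf) (he : e ≠ 0)
    (P0 P1 : A3) (g0 : Good P0) (g1 : Good P1)
    (h0 : a 0 = ag P0 / e) (h1 : a 1 = ag P1 / (e * ag Cp))
    (hr : ∀ k : ℕ, a (k + 2) = u1v * a (k + 1) - a k) :
    ∀ k : ℕ, ∃ P : A3, Good P ∧ a k = ag P / (e * ag Cp ^ k) := by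
  have hu : u1v = ag Up / ag Cp := by rw [eq_div_iff hCp]; exact hu1v
  suffices H : ∀ k : ℕ, ∃ P Q : A3, Good P ∧ Good Q ∧
      a k = ag P / (e * ag Cp ^ k) ∧ a (k + 1) = ag Q / (e * ag Cp ^ (k + 1)) by
    intro k; obtain ⟨P, Q, gP, _, hP, _⟩ := H k; exact ⟨P, gP, hP⟩
  intro k
  induction k with
  | zero =>
    exact ⟨P0, P1, g0, g1, by simpa using h0, by simpa using h1⟩
  | succ k ih =>
    obtain ⟨P, Q, gP, gQ, hP, hQ⟩ := ih
    refine ⟨Q, Up * Q - Cp ^ 2 * P, gQ,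
      good_step gQ (fun i => by rw [map_mul, map_pow, eval_Cp, zero_pow two_ne_zero, zero_mul]),
      hQ, ?_⟩
    have e1 : ag Up / ag Cp * (ag Q / (e * ag Cp ^ (k + 1))) =
        ag Up * ag Q / (e * ag Cp ^ (k + 1 + 1)) := by
      rw [div_mul_div_comm]; congr 1; ring
    have e2 : ag P / (e * ag Cp ^ k) = ag Cp ^ 2 * ag P / (e * ag Cp ^ (k + 1 + 1)) := by
      rw [show e * ag Cp ^ (k + 1 + 1) = ag Cp ^ 2 * (e * ag Cp ^ k) by ring,
        mul_div_mul_left _ _ (pow_ne_zero 2 hCp)]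
    rw [hr k, hu, hP, hQ, map_sub, map_mul, map_mul, map_pow, e1, e2, div_sub_div_same]

-- base-case numerator polynomials
def P4p : A3 := X 1 * X 2 + 1
def P5p : A3 := X 0 + X 2 + X 1 * X 2 ^ 2
def P0p : A3 := X 0 * X 1 + 1
def Pm1p : A3 := X 0 ^ 2 * X 1 + X 0 + X 2

lemma ag_P4p : ag P4p = X2 * X3 + 1 := by
  simp only [P4p, map_add, map_mul, map_one, ag_X1, ag_X2]
lemma ag_P5p : ag P5p = X1 + X3 + X2 * X3 ^ 2 := by
  simp only [P5p, map_add, map_mul, map_pow, ag_X0, ag_X1, ag_X2]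
lemma ag_P0p : ag P0p = X1 * X2 + 1 := by
  simp only [P0p, map_add, map_mul, map_one, ag_X0, ag_X1]
lemma ag_Pm1p : ag Pm1p = X1 ^ 2 * X2 + X1 + X3 := by
  simp only [Pm1p, map_add, map_mul, map_pow, ag_X0, ag_X1, ag_X2]

lemma good_P4p : Good P4p := by intro i; fin_cases i <;> simp [P4p, vv]
lemma good_P5p : Good P5p := by intro i; fin_cases i <;> simp [P5p, vv]
lemma good_P0p : Good P0p := by intro i; fin_cases i <;> simp [P0p, vv]
lemma good_Pm1p : Good Pm1p := by intro i; fin_cases i <;> simp [Pm1p, vv]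

lemma g7 : Good (Up * P5p - Cp ^ 2) :=
  good_step good_P5p (fun i => by rw [map_pow, eval_Cp, zero_pow two_ne_zero])
lemma g6 : Good (Up * P4p - (X 0 * X 1) * Cp) :=
  good_step good_P4p (fun i => by rw [map_mul, eval_Cp, mul_zero])
lemma gm3 : Good (Up * Pm1p - Cp ^ 2) :=
  good_step good_Pm1p (fun i => by rw [map_pow, eval_Cp, zero_pow two_ne_zero])
lemma gm2 : Good (Up * P0p - (X 1 * X 2) * Cp) :=
  good_step good_P0p (fun i => by rw [map_mul, eval_Cp, mul_zero])
lemma gu2 : Good (Up * Up - 2 * Cp ^ 2) :=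
  good_step good_Up (fun i => by rw [map_mul, map_pow, eval_Cp, zero_pow two_ne_zero, mul_zero])

set_option maxHeartbeats 2000000 in
theorem stmt8 (x : ℤ → Kf)
    (h1 : x 1 = X1) (h2 : x 2 = X2) (h3 : x 3 = X3)
    (hne : ∀ m : ℤ, x m ≠ 0)
    (hrec : ∀ m : ℤ, x m * x (m + 3) = x (m + 1) * x (m + 2) + 1)
    (w z : Kf)
    (hw : w = (X1 + X3) / X2)
    (hz : z = (X1 * X2 + 1 + X2 * X3) / (X1 * X3))
    (u : ℕ → Kf)
    (hu0 : u 0 = 1) (hu1 : u 1 = z * w - 2) (hu2 : u 2 = (u 1) ^ 2 - 2)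
    (hurec : ∀ n : ℕ, 2 ≤ n → u (n + 1) = u 1 * u n - u (n - 1)) :
    (∀ m : ℤ, 2 ≤ m → ∃ P : MvPolynomial (Fin 3) ℚ, Primitive P ∧
      x (2 * m + 1) = algebraMap (MvPolynomial (Fin 3) ℚ) Kf P /
        (X1 ^ (m - 1) * X2 ^ (m - 1) * X3 ^ (m - 2))) ∧
    (∀ m : ℤ, 1 ≤ m → ∃ P : MvPolynomial (Fin 3) ℚ, Primitive P ∧
      x (2 * m + 2) = algebraMap (MvPolynomial (Fin 3) ℚ) Kf P /
        (X1 ^ m * X2 ^ (m - 1) * X3 ^ (m - 1))) ∧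
    (∀ m : ℤ, 1 ≤ m → ∃ P : MvPolynomial (Fin 3) ℚ, Primitive P ∧
      x (-2 * m + 1) = algebraMap (MvPolynomial (Fin 3) ℚ) Kf P /
        (X1 ^ (m - 1) * X2 ^ m * X3 ^ m)) ∧
    (∀ m : ℤ, 1 ≤ m → ∃ P : MvPolynomial (Fin 3) ℚ, Primitive P ∧
      x (-2 * m + 2) = algebraMap (MvPolynomial (Fin 3) ℚ) Kf P /
        (X1 ^ (m - 1) * X2 ^ (m - 1) * X3 ^ m)) ∧
    (∀ n : ℕ, 1 ≤ n → ∃ P : MvPolynomial (Fin 3) ℚ, Primitive P ∧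
      u n = algebraMap (MvPolynomial (Fin 3) ℚ) Kf P / (X1 * X2 * X3) ^ n) := by
  -- the basic 3-term identity relating consecutive "v"-quantities
  have key : ∀ m : ℤ, x (m+1) * (x (m+2) + x (m+4)) = x (m+3) * (x m + x (m+2)) := by
    intro m
    have e1 := hrec m
    have e2 := hrec (m+1)
    rw [show m+1+3 = m+4 by ring, show m+1+1 = m+2 by ring, show m+1+2 = m+3 by ring] at e2
    linear_combination e2 - e1
  have hx0m : x 0 * X3 = X1 * X2 + 1 := by
    have h := hrec 0; norm_num at h; rw [h1, h2, h3] at h; exact h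
  have hzX : z * X1 * X3 = X1 * X2 + 1 + X2 * X3 := by
    rw [hz, div_mul_eq_mul_div, div_mul_eq_mul_div, div_eq_iff (mul_ne_zero hX1 hX3)]
    ring
  have LAiff : ∀ k : ℤ, (x (2*k) + x (2*k+2) = z * x (2*k+1)) ↔
      (x (2*k+2) + x (2*k+4) = z * x (2*k+3)) := by
    intro k
    have K := key (2*k)
    constructor
    · intro h
      refine mul_left_cancel₀ (hne (2*k+1)) ?_
      calc x (2*k+1) * (x (2*k+2) + x (2*k+4)) = x (2*k+3) * (x (2*k) + x (2*k+2)) := K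
        _ = x (2*k+1) * (z * x (2*k+3)) := by rw [h]; ring
    · intro h
      refine mul_left_cancel₀ (hne (2*k+3)) ?_
      calc x (2*k+3) * (x (2*k) + x (2*k+2)) = x (2*k+1) * (x (2*k+2) + x (2*k+4)) := K.symm
        _ = x (2*k+3) * (z * x (2*k+1)) := by rw [h]; ring
  have LBiff : ∀ k : ℤ, (x (2*k+1) + x (2*k+3) = w * x (2*k+2)) ↔
      (x (2*k+3) + x (2*k+5) = w * x (2*k+4)) := by
    intro k
    have K := key (2*k+1)
    rw [show 2*k+1+2 = 2*k+3 by ring, show 2*k+1+4 = 2*k+5 by ring,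
      show 2*k+1+3 = 2*k+4 by ring, show 2*k+1+1 = 2*k+2 by ring] at K
    constructor
    · intro h
      refine mul_left_cancel₀ (hne (2*k+2)) ?_
      calc x (2*k+2) * (x (2*k+3) + x (2*k+5)) = x (2*k+4) * (x (2*k+1) + x (2*k+3)) := K
        _ = x (2*k+2) * (w * x (2*k+4)) := by rw [h]; ring
    · intro h
      refine mul_left_cancel₀ (hne (2*k+4)) ?_
      calc x (2*k+4) * (x (2*k+1) + x (2*k+3)) = x (2*k+2) * (x (2*k+3) + x (2*k+5)) := K.symm
        _ = x (2*k+4) * (w * x (2*k+2)) := by rw [h]; ring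
  have LA : ∀ k : ℤ, x (2*k) + x (2*k+2) = z * x (2*k+1) := by
    intro k
    induction k using Int.induction_on with
    | zero =>
      norm_num
      rw [h1, h2]
      refine mul_left_cancel₀ hX3 ?_
      linear_combination hx0m - hzX
    | succ k ih =>
      rw [show 2*((k:ℤ)+1)+2 = 2*(k:ℤ)+4 by ring, show 2*((k:ℤ)+1)+1 = 2*(k:ℤ)+3 by ring,
        show 2*((k:ℤ)+1) = 2*(k:ℤ)+2 by ring]
      exact (LAiff k).mp ih
    | pred k ih =>
      refine (LAiff (-(k:ℤ)-1)).mpr ?_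
      rw [show 2*(-(k:ℤ)-1)+2 = 2*(-(k:ℤ)) by ring, show 2*(-(k:ℤ)-1)+4 = 2*(-(k:ℤ))+2 by ring,
        show 2*(-(k:ℤ)-1)+3 = 2*(-(k:ℤ))+1 by ring]
      exact ih
  have LB : ∀ k : ℤ, x (2*k+1) + x (2*k+3) = w * x (2*k+2) := by
    intro k
    induction k using Int.induction_on with
    | zero =>
      norm_num
      rw [h1, h2, h3, hw, div_mul_cancel₀ _ hX2]
    | succ k ih =>
      rw [show 2*((k:ℤ)+1)+1 = 2*(k:ℤ)+3 by ring, show 2*((k:ℤ)+1)+3 = 2*(k:ℤ)+5 by ring,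
        show 2*((k:ℤ)+1)+2 = 2*(k:ℤ)+4 by ring]
      exact (LBiff k).mp ih
    | pred k ih =>
      refine (LBiff (-(k:ℤ)-1)).mpr ?_
      rw [show 2*(-(k:ℤ)-1)+3 = 2*(-(k:ℤ))+1 by ring, show 2*(-(k:ℤ)-1)+5 = 2*(-(k:ℤ))+3 by ring,
        show 2*(-(k:ℤ)-1)+4 = 2*(-(k:ℤ))+2 by ring]
      exact ih
  have xB : ∀ m : ℤ, x (m+4) = u 1 * x (m+2) - x m := by
    intro m
    rcases Int.even_or_odd m with ⟨k, hk⟩ | ⟨k, hk⟩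
    · subst hk
      rw [show (k+k+4 : ℤ) = 2*k+4 by ring, show (k+k+2 : ℤ) = 2*k+2 by ring,
        show (k+k : ℤ) = 2*k by ring, hu1]
      have A1 := LA (k+1)
      rw [show 2*(k+1)+2 = 2*k+4 by ring, show 2*(k+1)+1 = 2*k+3 by ring,
        show 2*(k+1) = 2*k+2 by ring] at A1
      linear_combination A1 + z * LB k + LA k
    · subst hk
      rw [show (2*k+1+4 : ℤ) = 2*k+5 by ring, show (2*k+1+2 : ℤ) = 2*k+3 by ring, hu1]
      have A1 := LA (k+1)
      rw [show 2*(k+1)+2 = 2*k+4 by ring, show 2*(k+1)+1 = 2*k+3 by ring,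
        show 2*(k+1) = 2*k+2 by ring] at A1
      have B1 := LB (k+1)
      rw [show 2*(k+1)+1 = 2*k+3 by ring, show 2*(k+1)+3 = 2*k+5 by ring,
        show 2*(k+1)+2 = 2*k+4 by ring] at B1
      linear_combination B1 + w * A1 + LB k
  -- nonzeroness facts (local copies for field_simp)
  have hx1 : X1 ≠ 0 := hX1
  have hx2 : X2 ≠ 0 := hX2
  have hx3 : X3 ≠ 0 := hX3
  have hcp : ag Cp ≠ 0 := hCp
  -- u 1 in terms of polynomials
  have hu1K : u 1 * ag Cp = ag Up := by
    rw [hu1, hz, hw, ag_Cp, ag_Up]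
    field_simp
  have hu1d : u 1 = ag Up / ag Cp := by rw [eq_div_iff hcp]; exact hu1K
  -- base values
  have hx4m : X1 * x 4 = X2 * X3 + 1 := by
    have h := hrec 1; norm_num at h; rw [h1, h2, h3] at h; exact h
  have hx5m : X2 * x 5 = X3 * x 4 + 1 := by
    have h := hrec 2; norm_num at h; rw [h2, h3] at h; exact h
  have hxm1m : x (-1) * X2 = x 0 * X1 + 1 := by
    have h := hrec (-1); norm_num at h; rw [h1, h2] at h; exact h
  have hx0d : x 0 = ag P0p / X3 := by
    rw [eq_div_iff hX3, ag_P0p]; linear_combination hx0m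
  have hx4d : x 4 = ag P4p / X1 := by
    rw [eq_div_iff hX1, ag_P4p]; linear_combination hx4m
  have hx5d : x 5 = ag P5p / (X1 * X2) := by
    rw [eq_div_iff (mul_ne_zero hX1 hX2), ag_P5p]
    linear_combination X1 * hx5m + X3 * hx4m
  have hxm1d : x (-1) = ag Pm1p / (X2 * X3) := by
    rw [eq_div_iff (mul_ne_zero hX2 hX3), ag_Pm1p]
    linear_combination X3 * hxm1m + X1 * hx0m
  -- second-level base values
  have hx6d : x 6 = ag (Up * P4p - (X 0 * X 1) * Cp) / (X1 * ag Cp) := by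
    have hB := xB 2
    norm_num at hB
    rw [hB, h2, hx4d, hu1d, map_sub, map_mul, map_mul, map_mul, ag_X0, ag_X1, ag_Cp]
    field_simp
  have hx7d : x 7 = ag (Up * P5p - Cp ^ 2) / ((X1 * X2) * ag Cp) := by
    have hB := xB 3
    norm_num at hB
    rw [hB, h3, hx5d, hu1d, map_sub, map_mul, map_pow, ag_Cp]
    field_simp
  have hxm3d : x (-3) = ag (Up * Pm1p - Cp ^ 2) / ((X2 * X3) * ag Cp) := by
    have hB := xB (-3)
    norm_num at hB
    -- hB : x 1 = u 1 * x (-1) - x (-3)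
    have hB' : x (-3) = u 1 * x (-1) - x 1 := by linear_combination hB
    rw [hB', h1, hxm1d, hu1d, map_sub, map_mul, map_pow, ag_Cp]
    field_simp
  have hxm2d : x (-2) = ag (Up * P0p - (X 1 * X 2) * Cp) / (X3 * ag Cp) := by
    have hB := xB (-2)
    norm_num at hB
    have hB' : x (-2) = u 1 * x 0 - x 2 := by linear_combination hB
    rw [hB', h2, hx0d, hu1d, map_sub, map_mul, map_mul, map_mul, ag_X1, ag_X2, ag_Cp]
    field_simp
  have hu2d : u 2 = ag (Up * Up - 2 * Cp ^ 2) / (ag Cp * ag Cp) := by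
    rw [hu2, hu1d, map_sub, map_mul, map_mul, map_pow, map_ofNat]
    field_simp
  -- the five families
  have fam1 : ∀ k : ℕ, ∃ P : A3, Good P ∧
      x (2*(k:ℤ)+5) = ag P / ((X1*X2) * ag Cp ^ k) := by
    refine genKey (u 1) hu1K _ (X1*X2) (mul_ne_zero hX1 hX2) P5p (Up * P5p - Cp ^ 2)
      good_P5p g7 ?_ ?_ ?_
    · show x (2*((0:ℕ):ℤ)+5) = ag P5p / (X1*X2)
      norm_num [hx5d]
    · show x (2*((1:ℕ):ℤ)+5) = ag (Up * P5p - Cp ^ 2) / (X1*X2 * ag Cp)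
      norm_num [hx7d]
    · intro k
      show x (2*(((k+2):ℕ):ℤ)+5) = u 1 * x (2*(((k+1):ℕ):ℤ)+5) - x (2*(k:ℤ)+5)
      have hB := xB (2*(k:ℤ)+5)
      rw [show (2*(k:ℤ)+5+4) = 2*((k:ℤ)+2)+5 by ring,
        show (2*(k:ℤ)+5+2) = 2*((k:ℤ)+1)+5 by ring] at hB
      push_cast
      exact hB
  have fam2 : ∀ k : ℕ, ∃ P : A3, Good P ∧
      x (2*(k:ℤ)+4) = ag P / (X1 * ag Cp ^ k) := by
    refine genKey (u 1) hu1K _ X1 hX1 P4p (Up * P4p - (X 0 * X 1) * Cp)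
      good_P4p g6 ?_ ?_ ?_
    · show x (2*((0:ℕ):ℤ)+4) = ag P4p / X1
      norm_num [hx4d]
    · show x (2*((1:ℕ):ℤ)+4) = ag (Up * P4p - (X 0 * X 1) * Cp) / (X1 * ag Cp)
      norm_num [hx6d]
    · intro k
      show x (2*(((k+2):ℕ):ℤ)+4) = u 1 * x (2*(((k+1):ℕ):ℤ)+4) - x (2*(k:ℤ)+4)
      have hB := xB (2*(k:ℤ)+4)
      rw [show (2*(k:ℤ)+4+4) = 2*((k:ℤ)+2)+4 by ring,
        show (2*(k:ℤ)+4+2) = 2*((k:ℤ)+1)+4 by ring] at hB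
      push_cast
      exact hB
  have fam3 : ∀ k : ℕ, ∃ P : A3, Good P ∧
      x (-2*(k:ℤ)-1) = ag P / ((X2*X3) * ag Cp ^ k) := by
    refine genKey (u 1) hu1K _ (X2*X3) (mul_ne_zero hX2 hX3) Pm1p (Up * Pm1p - Cp ^ 2)
      good_Pm1p gm3 ?_ ?_ ?_
    · show x (-2*((0:ℕ):ℤ)-1) = ag Pm1p / (X2*X3)
      norm_num [hxm1d]
    · show x (-2*((1:ℕ):ℤ)-1) = ag (Up * Pm1p - Cp ^ 2) / (X2*X3 * ag Cp)
      norm_num [hxm3d]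
    · intro k
      show x (-2*(((k+2):ℕ):ℤ)-1) = u 1 * x (-2*(((k+1):ℕ):ℤ)-1) - x (-2*(k:ℤ)-1)
      have hB := xB (-2*(k:ℤ)-5)
      rw [show (-2*(k:ℤ)-5+4) = -2*(k:ℤ)-1 by ring,
        show (-2*(k:ℤ)-5+2) = -2*((k:ℤ)+1)-1 by ring,
        show (-2*(k:ℤ)-5) = -2*((k:ℤ)+2)-1 by ring] at hB
      push_cast
      linear_combination hB
  have fam4 : ∀ k : ℕ, ∃ P : A3, Good P ∧
      x (-2*(k:ℤ)) = ag P / (X3 * ag Cp ^ k) := by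
    refine genKey (u 1) hu1K _ X3 hX3 P0p (Up * P0p - (X 1 * X 2) * Cp)
      good_P0p gm2 ?_ ?_ ?_
    · show x (-2*((0:ℕ):ℤ)) = ag P0p / X3
      norm_num [hx0d]
    · show x (-2*((1:ℕ):ℤ)) = ag (Up * P0p - (X 1 * X 2) * Cp) / (X3 * ag Cp)
      norm_num [hxm2d]
    · intro k
      show x (-2*(((k+2):ℕ):ℤ)) = u 1 * x (-2*(((k+1):ℕ):ℤ)) - x (-2*(k:ℤ))
      have hB := xB (-2*(k:ℤ)-4)
      rw [show (-2*(k:ℤ)-4+4) = -2*(k:ℤ) by ring,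
        show (-2*(k:ℤ)-4+2) = -2*((k:ℤ)+1) by ring,
        show (-2*(k:ℤ)-4) = -2*((k:ℤ)+2) by ring] at hB
      push_cast
      linear_combination hB
  have fam5 : ∀ k : ℕ, ∃ P : A3, Good P ∧
      u (k+1) = ag P / (ag Cp * ag Cp ^ k) := by
    refine genKey (u 1) hu1K _ (ag Cp) hcp Up (Up * Up - 2 * Cp ^ 2)
      good_Up gu2 ?_ ?_ ?_
    · show u 1 = ag Up / ag Cp
      exact hu1d
    · show u 2 = ag (Up * Up - 2 * Cp ^ 2) / (ag Cp * ag Cp)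
      exact hu2d
    · intro k
      show u (k+3) = u 1 * u (k+2) - u (k+1)
      have h := hurec (k+2) (by omega)
      norm_num at h
      exact h
  -- assemble
  refine ⟨?_, ?_, ?_, ?_, ?_⟩
  · intro m hm
    obtain ⟨k, hk⟩ : ∃ k : ℕ, (k : ℤ) = m - 2 := ⟨(m-2).toNat, Int.toNat_of_nonneg (by omega)⟩
    obtain ⟨P, gP, hP⟩ := fam1 k
    refine ⟨P, good_primitive gP, ?_⟩
    rw [show 2*m+1 = 2*(k:ℤ)+5 by omega, hP, ag_Cp,
      show m-1 = ((k+1:ℕ):ℤ) by push_cast; omega, show m-2 = ((k:ℕ):ℤ) from hk.symm,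
      zpow_natCast, zpow_natCast, zpow_natCast]
    ring
  · intro m hm
    obtain ⟨k, hk⟩ : ∃ k : ℕ, (k : ℤ) = m - 1 := ⟨(m-1).toNat, Int.toNat_of_nonneg (by omega)⟩
    obtain ⟨P, gP, hP⟩ := fam2 k
    refine ⟨P, good_primitive gP, ?_⟩
    rw [show 2*m+2 = 2*(k:ℤ)+4 by omega, hP, ag_Cp,
      show m = ((k+1:ℕ):ℤ) by push_cast; omega, show ((k+1:ℕ):ℤ)-1 = ((k:ℕ):ℤ) by push_cast; ring,
      zpow_natCast, zpow_natCast, zpow_natCast]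
    ring
  · intro m hm
    obtain ⟨k, hk⟩ : ∃ k : ℕ, (k : ℤ) = m - 1 := ⟨(m-1).toNat, Int.toNat_of_nonneg (by omega)⟩
    obtain ⟨P, gP, hP⟩ := fam3 k
    refine ⟨P, good_primitive gP, ?_⟩
    rw [show -2*m+1 = -2*(k:ℤ)-1 by omega, hP, ag_Cp,
      show m-1 = ((k:ℕ):ℤ) from hk.symm, show m = ((k+1:ℕ):ℤ) by push_cast; omega,
      zpow_natCast, zpow_natCast, zpow_natCast]
    ring
  · intro m hm
    obtain ⟨k, hk⟩ : ∃ k : ℕ, (k : ℤ) = m - 1 := ⟨(m-1).toNat, Int.toNat_of_nonneg (by omega)⟩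
    obtain ⟨P, gP, hP⟩ := fam4 k
    refine ⟨P, good_primitive gP, ?_⟩
    rw [show -2*m+2 = -2*(k:ℤ) by omega, hP, ag_Cp,
      show m-1 = ((k:ℕ):ℤ) from hk.symm, show m = ((k+1:ℕ):ℤ) by push_cast; omega,
      zpow_natCast, zpow_natCast, zpow_natCast]
    ring
  · intro n hn
    obtain ⟨k, hk⟩ : ∃ k : ℕ, n = k + 1 := ⟨n - 1, by omega⟩
    subst hk
    obtain ⟨P, gP, hP⟩ := fam5 k
    refine ⟨P, good_primitive gP, ?_⟩
    rw [hP, ag_Cp]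
    ring

end
end
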